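/- Let L ≥ 0 and n ≥ 1, and let A_0, A_1, …, A_L ∈ ℝ^{n×n} be entrywise nonnegative matrices. Let 𝒜 ∈ ℝ^{n(L+1)×n(L+1)} be the associated delay block matrix. Then ρ(𝒜) < 1 if and only if ρ(∑_{ℓ=0}^L A_ℓ) < 1. -/

import Mathlib

open Matrix BigOperators

/-- The spectral radius of a real square matrix: the maximum modulus of its
complex eigenvalues. -/
noncomputable def specRad {m : Type*} [Fintype m] [DecidableEq m]
    (A : Matrix m m ℝ) : ℝ :=
  (spectralRadius ℂ (A.map (algebraMap ℝ ℂ))).toReal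

/-- The delay block matrix associated to matrices `A 0, …, A L`: first block row
`(A 0  A 1 ⋯ A L)`, identity matrices on the block subdiagonal, zeros elsewhere. -/
def delayBlock {n L : ℕ} (A : Fin (L + 1) → Matrix (Fin n) (Fin n) ℝ) :
    Matrix (Fin n × Fin (L + 1)) (Fin n × Fin (L + 1)) ℝ :=
  fun p q =>
    if (p.2 : ℕ) = 0 then A q.2 p.1 q.1
    else if p.1 = q.1 ∧ (q.2 : ℕ) + 1 = (p.2 : ℕ) then 1 else 0

/-!
For a nonnegative matrix `B`, `ρ(B) < 1` iff `B v ≤ c v` for some entrywise positive `v` and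
some `c < 1`. Such a `v` makes `B` a contraction for the weighted max-norm (conjugate by
`diagonal v` and bound the row sums); conversely, Gelfand's formula gives `‖B ^ k‖_∞ ≤ c ^ k`
for some `k ≥ 1`, and then `v = ∑_{r<k} c⁻ʳ Bʳ 1` works.

Such certificates pass between `𝒜` and `∑ ℓ, A ℓ`. If `𝒜 w ≤ c w`, the identity rows of `𝒜`
force `w (·, 0) ≤ w (·, ℓ)`, so the first block of `w` is a certificate for `∑ ℓ, A ℓ` with
the same `c`. If `(∑ ℓ, A ℓ) v ≤ c v`, then `w (·, ℓ) = d⁻ˡ v` with `d = c ^ (1 / (L + 1))`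
satisfies `𝒜 w ≤ d w`.
-/

section NonnegMatrix

variable {l m : Type*} [Fintype m]

lemma mulVec_le_mulVec_of_nonneg {B : Matrix l m ℝ} (hB : ∀ i j, 0 ≤ B i j) {v w : m → ℝ}
    (h : v ≤ w) : B *ᵥ v ≤ B *ᵥ w :=
  fun i => Finset.sum_le_sum fun j _ => mul_le_mul_of_nonneg_left (h j) (hB i j)

lemma mulVec_nonneg_of_nonneg {B : Matrix l m ℝ} (hB : ∀ i j, 0 ≤ B i j) {v : m → ℝ}
    (hv : 0 ≤ v) : 0 ≤ B *ᵥ v := by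
  simpa using mulVec_le_mulVec_of_nonneg hB hv

variable [DecidableEq m]

lemma pow_mulVec_nonneg_of_nonneg {B : Matrix m m ℝ} (hB : ∀ i j, 0 ≤ B i j) {v : m → ℝ}
    (hv : 0 ≤ v) (k : ℕ) : 0 ≤ B ^ k *ᵥ v := by
  induction k with
  | zero => simpa using hv
  | succ k ih => simpa [pow_succ', ← mulVec_mulVec] using mulVec_nonneg_of_nonneg hB ih

lemma exists_le_mulVec_le_of_pow_mulVec_le {B : Matrix m m ℝ} (hB : ∀ i j, 0 ≤ B i j)
    {c : ℝ} (hc : 0 < c) {k : ℕ} (hk : 0 < k) {u : m → ℝ} (hu : 0 ≤ u)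
    (h : B ^ k *ᵥ u ≤ c ^ k • u) : ∃ v, u ≤ v ∧ B *ᵥ v ≤ c • v := by
  set f : ℕ → m → ℝ := fun r => c⁻¹ ^ r • (B ^ r *ᵥ u)
  have hf0 : f 0 = u := by simp [f]
  have hBf : ∀ r, B *ᵥ f r = c • f (r + 1) := by
    intro r
    simp only [f, mulVec_smul, mulVec_mulVec, ← pow_succ', smul_smul, pow_succ]
    rw [mul_left_comm, mul_inv_cancel₀ hc.ne', mul_one]
  have hfk : f k ≤ u := by
    calc f k ≤ c⁻¹ ^ k • (c ^ k • u) := smul_le_smul_of_nonneg_left h (by positivity)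
      _ = u := by rw [smul_smul, ← mul_pow, inv_mul_cancel₀ hc.ne', one_pow, one_smul]
  refine ⟨∑ r ∈ Finset.range k, f r, ?_, ?_⟩
  · rw [← hf0]
    exact Finset.single_le_sum
      (fun r _ => smul_nonneg (by positivity) (pow_mulVec_nonneg_of_nonneg hB hu r))
      (Finset.mem_range.mpr hk)
  · have htel : B *ᵥ ∑ r ∈ Finset.range k, f r + c • u
        = c • ∑ r ∈ Finset.range k, f r + c • f k := by
      rw [mulVec_sum, Finset.sum_congr rfl fun r _ => hBf r, ← Finset.smul_sum, ← smul_add,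
        ← smul_add, ← hf0, ← Finset.sum_range_succ', Finset.sum_range_succ]
    refine le_of_add_le_add_right (a := c • u) ?_
    rw [htel]
    exact add_le_add_right (smul_le_smul_of_nonneg_left hfk hc.le) _

end NonnegMatrix

section SpectralRadius

attribute [local instance] Matrix.linftyOpNormedRing Matrix.linftyOpNormedAlgebra

variable {m : Type*} [Fintype m] [DecidableEq m]

lemma specRad_nonneg (B : Matrix m m ℝ) : 0 ≤ specRad B := ENNReal.toReal_nonneg

lemma spectralRadius_le_linfty_opNNNorm (X : Matrix m m ℂ) : spectralRadius ℂ X ≤ ‖X‖₊ := by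
  have hone : ‖(1 : Matrix m m ℂ)‖₊ ≤ 1 := by
    rw [← diagonal_one, linfty_opNNNorm_diagonal]
    simpa using pi_nnnorm_const_le (ι := m) (1 : ℂ)
  have := spectrum.spectralRadius_le_pow_nnnorm_pow_one_div ℂ X 0
  norm_num at this
  exact this.trans (mul_le_of_le_one_right' (by exact_mod_cast hone))

lemma specRad_units_conj (u : (Matrix m m ℝ)ˣ) (B : Matrix m m ℝ) :
    specRad (((u⁻¹ : (Matrix m m ℝ)ˣ) : Matrix m m ℝ) * B * (u : Matrix m m ℝ)) = specRad B := by
  let g : Matrix m m ℝ →+* Matrix m m ℂ := (algebraMap ℝ ℂ).mapMatrix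
  let v : (Matrix m m ℂ)ˣ := Units.map g u
  have hconj : g (((u⁻¹ : (Matrix m m ℝ)ˣ) : Matrix m m ℝ) * B * (u : Matrix m m ℝ))
      = ((v⁻¹ : (Matrix m m ℂ)ˣ) : Matrix m m ℂ) * g B * (v : Matrix m m ℂ) := by
    simp only [map_mul, v, Units.coe_map_inv, Units.coe_map, MonoidHom.coe_coe]
  change (spectralRadius ℂ (g _)).toReal = (spectralRadius ℂ (g B)).toReal
  rw [hconj, spectralRadius, spectrum.units_conjugate']
  rfl

lemma specRad_le_of_forall_sum_abs_le {B : Matrix m m ℝ} {c : ℝ} (hc : 0 ≤ c)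
    (h : ∀ i, ∑ j, |B i j| ≤ c) : specRad B ≤ c := by
  have hnorm : ‖B.map (algebraMap ℝ ℂ)‖₊ ≤ c.toNNReal := by
    rw [linfty_opNNNorm_def]
    refine Finset.sup_le fun i _ => ?_
    rw [← NNReal.coe_le_coe, Real.coe_toNNReal c hc]
    push_cast
    simpa [Complex.norm_real] using h i
  refine ENNReal.toReal_le_of_le_ofReal hc ?_
  exact (spectralRadius_le_linfty_opNNNorm _).trans (ENNReal.coe_le_coe.mpr hnorm)

lemma specRad_le_of_mulVec_le {B : Matrix m m ℝ} (hB : ∀ i j, 0 ≤ B i j) {v : m → ℝ}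
    (hv : ∀ i, 0 < v i) {c : ℝ} (hc : 0 ≤ c) (h : B *ᵥ v ≤ c • v) : specRad B ≤ c := by
  have hv0 : ∀ i, v i ≠ 0 := fun i => (hv i).ne'
  let u : (Matrix m m ℝ)ˣ := ⟨diagonal v, diagonal v⁻¹, by simp [hv0], by simp [hv0]⟩
  rw [← specRad_units_conj u]
  refine specRad_le_of_forall_sum_abs_le hc fun i => ?_
  have hrow : ∑ j, |(diagonal v⁻¹ * B * diagonal v) i j| = (v i)⁻¹ * (B *ᵥ v) i := by
    simp only [mul_diagonal, diagonal_mul, mulVec, dotProduct, Finset.mul_sum, Pi.inv_apply]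
    refine Finset.sum_congr rfl fun j _ => ?_
    rw [abs_of_nonneg (mul_nonneg (mul_nonneg (inv_nonneg.2 (hv i).le) (hB i j)) (hv j).le),
      mul_assoc]
  calc _ = (v i)⁻¹ * (B *ᵥ v) i := hrow
    _ ≤ (v i)⁻¹ * (c * v i) := mul_le_mul_of_nonneg_left (h i) (inv_nonneg.mpr (hv i).le)
    _ = c := by field_simp [(hv i).ne']

lemma exists_pow_sum_abs_le_of_specRad_lt (B : Matrix m m ℝ) {c : ℝ} (h : specRad B < c) :
    ∃ k, 0 < k ∧ ∀ i, ∑ j, |(B ^ k) i j| ≤ c ^ k := by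
  let M := B.map (algebraMap ℝ ℂ)
  have hc : 0 < c := (specRad_nonneg B).trans_lt h
  have hlt : spectralRadius ℂ M < ENNReal.ofReal c :=
    (ENNReal.lt_ofReal_iff_toReal_lt
      (ne_top_of_le_ne_top ENNReal.coe_ne_top (spectralRadius_le_linfty_opNNNorm M))).mpr h
  obtain ⟨N, hN⟩ := Filter.eventually_atTop.mp
    ((spectrum.pow_nnnorm_pow_one_div_tendsto_nhds_spectralRadius M).eventually_lt_const hlt)
  set k := N + 1
  have hk : (0 : ℝ) < k := by positivity
  have hnorm : ‖M ^ k‖ < c ^ k := by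
    have := ENNReal.rpow_lt_rpow (hN k N.le_succ) hk
    rw [← ENNReal.rpow_mul, one_div, inv_mul_cancel₀ hk.ne', ENNReal.rpow_one,
      ENNReal.ofReal_rpow_of_pos hc, Real.rpow_natCast] at this
    exact (ENNReal.lt_ofReal_iff_toReal_lt ENNReal.coe_ne_top).mp this
  refine ⟨k, N.succ_pos, fun i => ?_⟩
  have hrow : ∑ j, ‖(M ^ k) i j‖₊ ≤ ‖M ^ k‖₊ := by
    rw [linfty_opNNNorm_def]
    exact Finset.le_sup (f := fun i => ∑ j, ‖(M ^ k) i j‖₊) (Finset.mem_univ i)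
  have hMk : M ^ k = (B ^ k).map (algebraMap ℝ ℂ) := (map_pow (algebraMap ℝ ℂ).mapMatrix B k).symm
  calc ∑ j, |(B ^ k) i j| = ∑ j, ‖(M ^ k) i j‖ := by simp [hMk, Complex.norm_real]
    _ ≤ ‖M ^ k‖ := by simpa using NNReal.coe_le_coe.mpr hrow
    _ ≤ c ^ k := hnorm.le

end SpectralRadius

section PerronFrobenius

variable {m : Type*} [Fintype m] [DecidableEq m]

lemma exists_pos_mulVec_le_of_specRad_lt {B : Matrix m m ℝ} (hB : ∀ i j, 0 ≤ B i j) {c : ℝ}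
    (h : specRad B < c) : ∃ v, (∀ i, 0 < v i) ∧ B *ᵥ v ≤ c • v := by
  obtain ⟨k, hk, hrow⟩ := exists_pow_sum_abs_le_of_specRad_lt B h
  have hpow : B ^ k *ᵥ 1 ≤ c ^ k • 1 := fun i => by
    simpa [mulVec, dotProduct] using (Finset.sum_le_sum fun j _ => le_abs_self _).trans (hrow i)
  obtain ⟨v, hv1, hv⟩ := exists_le_mulVec_le_of_pow_mulVec_le hB
    ((specRad_nonneg B).trans_lt h) hk zero_le_one hpow
  exact ⟨v, fun i => one_pos.trans_le (hv1 i), hv⟩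

lemma specRad_lt_one_iff_exists_mulVec_le {B : Matrix m m ℝ} (hB : ∀ i j, 0 ≤ B i j) :
    specRad B < 1 ↔ ∃ c ∈ Set.Ioo (0 : ℝ) 1, ∃ v : m → ℝ, (∀ i, 0 < v i) ∧ B *ᵥ v ≤ c • v := by
  constructor
  · intro h
    obtain ⟨c, hBc, hc1⟩ := exists_between h
    exact ⟨c, ⟨(specRad_nonneg B).trans_lt hBc, hc1⟩, exists_pos_mulVec_le_of_specRad_lt hB hBc⟩
  · rintro ⟨c, ⟨hc0, hc1⟩, v, hv, hBv⟩
    exact (specRad_le_of_mulVec_le hB hv hc0.le hBv).trans_lt hc1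

end PerronFrobenius

section DelayBlock

variable {n L : ℕ} {A : Fin (L + 1) → Matrix (Fin n) (Fin n) ℝ}

lemma delayBlock_nonneg (hA : ∀ ℓ i j, 0 ≤ A ℓ i j) (p q : Fin n × Fin (L + 1)) :
    0 ≤ delayBlock A p q := by
  unfold delayBlock
  split_ifs <;> simp [hA]

variable (A) in
lemma delayBlock_mulVec_apply_zero (w : Fin n × Fin (L + 1) → ℝ) (i : Fin n) :
    (delayBlock A *ᵥ w) (i, 0) = ∑ ℓ, (A ℓ *ᵥ fun j => w (j, ℓ)) i := by
  simp only [mulVec, dotProduct, Fintype.sum_prod_type, delayBlock, Fin.val_zero, if_true]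
  exact Finset.sum_comm

variable (A) in
lemma delayBlock_mulVec_apply_succ (w : Fin n × Fin (L + 1) → ℝ) (i : Fin n) (ℓ : Fin L) :
    (delayBlock A *ᵥ w) (i, ℓ.succ) = w (i, ℓ.castSucc) := by
  have hrow : delayBlock A (i, ℓ.succ) = Pi.single (i, ℓ.castSucc) 1 := by
    ext ⟨j, k⟩
    simp only [delayBlock, Fin.val_succ, Nat.add_one_ne_zero, if_false, Pi.single_apply,
      Prod.ext_iff, Fin.ext_iff, Fin.val_castSucc, Nat.add_right_cancel_iff]
    simp only [eq_comm]
  rw [mulVec, hrow, single_one_dotProduct]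

lemma sum_mulVec_le_of_delayBlock_mulVec_le (hA : ∀ ℓ i j, 0 ≤ A ℓ i j) {c : ℝ} (hc : c ≤ 1)
    {w : Fin n × Fin (L + 1) → ℝ} (hw : 0 ≤ w) (h : delayBlock A *ᵥ w ≤ c • w) :
    (∑ ℓ, A ℓ) *ᵥ (fun i => w (i, 0)) ≤ c • fun i => w (i, 0) := by
  have hmono : ∀ ℓ i, w (i, 0) ≤ w (i, ℓ) := by
    intro ℓ i
    induction ℓ using Fin.induction with
    | zero => rfl
    | succ ℓ ih =>
      calc w (i, 0) ≤ w (i, ℓ.castSucc) := ih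
        _ = (delayBlock A *ᵥ w) (i, ℓ.succ) := (delayBlock_mulVec_apply_succ A w i ℓ).symm
        _ ≤ c * w (i, ℓ.succ) := h _
        _ ≤ w (i, ℓ.succ) := mul_le_of_le_one_left (hw _) hc
  intro i
  calc ((∑ ℓ, A ℓ) *ᵥ fun i => w (i, 0)) i = ∑ ℓ, (A ℓ *ᵥ fun j => w (j, 0)) i := by
        simp [sum_mulVec]
    _ ≤ ∑ ℓ, (A ℓ *ᵥ fun j => w (j, ℓ)) i := Finset.sum_le_sum fun ℓ _ =>
        mulVec_le_mulVec_of_nonneg (hA ℓ) (fun j => hmono ℓ j) i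
    _ = (delayBlock A *ᵥ w) (i, 0) := (delayBlock_mulVec_apply_zero A w i).symm
    _ ≤ c * w (i, 0) := h _

lemma delayBlock_mulVec_le_of_sum_mulVec_le (hA : ∀ ℓ i j, 0 ≤ A ℓ i j) {d : ℝ} (hd0 : 0 < d)
    (hd1 : d ≤ 1) {v : Fin n → ℝ} (hv : 0 ≤ v) (h : (∑ ℓ, A ℓ) *ᵥ v ≤ d ^ (L + 1) • v) :
    delayBlock A *ᵥ (fun p => d⁻¹ ^ (p.2 : ℕ) * v p.1) ≤
      d • fun p => d⁻¹ ^ (p.2 : ℕ) * v p.1 := by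
  rintro ⟨i, ℓ⟩
  cases ℓ using Fin.cases with
  | zero =>
    rw [delayBlock_mulVec_apply_zero]
    calc ∑ ℓ, (A ℓ *ᵥ fun j => d⁻¹ ^ (ℓ : ℕ) * v j) i ≤ ∑ ℓ, (A ℓ *ᵥ d⁻¹ ^ L • v) i :=
          Finset.sum_le_sum fun ℓ _ => mulVec_le_mulVec_of_nonneg (hA ℓ) (fun j =>
            mul_le_mul_of_nonneg_right (pow_le_pow_right₀ (one_le_inv₀ hd0 |>.mpr hd1) ℓ.is_le)
              (hv j)) i
      _ = d⁻¹ ^ L * ((∑ ℓ, A ℓ) *ᵥ v) i := by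
          simp [sum_mulVec, mulVec_smul, Finset.mul_sum]
      _ ≤ d⁻¹ ^ L * (d ^ (L + 1) * v i) := mul_le_mul_of_nonneg_left (h i) (by positivity)
      _ = d * (d⁻¹ ^ 0 * v i) := by rw [inv_pow]; field_simp; ring
  | succ ℓ =>
    rw [delayBlock_mulVec_apply_succ]
    simp only [Fin.val_castSucc, Fin.val_succ, Pi.smul_apply, smul_eq_mul, pow_succ', ← mul_assoc,
      mul_inv_cancel₀ hd0.ne', one_mul, le_refl]

end DelayBlock

theorem stmt0 {n L : ℕ}
    (A : Fin (L + 1) → Matrix (Fin n) (Fin n) ℝ)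
    (hA : ∀ ℓ i j, 0 ≤ A ℓ i j) :
    specRad (delayBlock A) < 1 ↔ specRad (∑ ℓ, A ℓ) < 1 := by
  have hS : ∀ i j, 0 ≤ (∑ ℓ, A ℓ) i j := fun i j => by
    simpa only [Matrix.sum_apply] using Finset.sum_nonneg fun ℓ _ => hA ℓ i j
  rw [specRad_lt_one_iff_exists_mulVec_le (delayBlock_nonneg hA),
    specRad_lt_one_iff_exists_mulVec_le hS]
  constructor
  · rintro ⟨c, hc, w, hw, hAw⟩
    exact ⟨c, hc, _, fun i => hw _,
      sum_mulVec_le_of_delayBlock_mulVec_le hA hc.2.le (fun p => (hw p).le) hAw⟩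
  · rintro ⟨c, ⟨hc0, hc1⟩, v, hv, hSv⟩
    set d := c ^ ((L + 1 : ℕ)⁻¹ : ℝ)
    have hd0 : 0 < d := Real.rpow_pos_of_pos hc0 _
    have hd1 : d < 1 := Real.rpow_lt_one hc0.le hc1 (by positivity)
    have hdc : d ^ (L + 1) = c := Real.rpow_inv_natCast_pow hc0.le L.succ_ne_zero
    refine ⟨d, ⟨hd0, hd1⟩, _, fun p => by have := hv p.1; positivity,
      delayBlock_mulVec_le_of_sum_mulVec_le hA hd0 hd1.le (fun i => (hv i).le) (hdc ▸ hSv)⟩
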